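/- arXiv:gr-qc/9712049 — 3 statements merged into one kernel-verified Lean document; each statement's English description precedes it below -/
import Mathlib

section
/- Let N ≥ 2 and let M be the (N-1)×(N-1) real symmetric tridiagonal matrix with diagonal entries M_{jj} = 2j(N-j) and off-diagonal entries M_{j,j+1} = M_{j+1,j} = -√(j(j+1)(N-j)(N-j-1)) for j = 1,…,N-2. Then for every vector q ∈ ℝ^{N-1}, setting p_j = √(j(N-j))·q_j, one has qᵀMq = p_1² + p_{N-1}² + Σ_{j=1}^{N-2}(p_j - p_{j+1})². -/
/-!
With `a_j = √(j (N - j))` the matrix is `M = D T D`, where `D = diagonal a` and `T` is the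
Dirichlet Laplacian of the path (`2` on the diagonal, `-1` next to it): the off-diagonal entry
`√(j (j+1) (N-j) (N-j-1))` factors as `a_j a_{j+1}`. Hence `qᵀ M q = pᵀ T p` with `p = D q`, and
expanding the squares shows `pᵀ T p = p_1² + p_{N-1}² + ∑ (p_j - p_{j+1})²`.
-/

open Matrix

theorem Fin.sum_sum_ite_val_succ_eq {M : Type*} [AddCommMonoid M] {n : ℕ}
    (c : Fin (n + 1) → Fin (n + 1) → M) :
    ∑ i : Fin (n + 1), ∑ j : Fin (n + 1), (if (i : ℕ) + 1 = j then c i j else 0) =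
      ∑ k : Fin n, c k.castSucc k.succ := by
  have hinner : ∀ i : Fin (n + 1), ∑ j : Fin (n + 1), (if (i : ℕ) + 1 = j then c i j else 0) =
      ∑ k : Fin n, if i = k.castSucc then c i k.succ else 0 := fun i => by
    rw [Fin.sum_univ_succ, if_neg (by simp)]
    simp [Fin.ext_iff]
  simp only [hinner]
  rw [Finset.sum_comm]
  simp

theorem dotProduct_mulVec_of_tridiagonal {R : Type*} [CommRing R] {n : ℕ}
    (M : Matrix (Fin (n + 1)) (Fin (n + 1)) R)
    (hzero : ∀ i j : Fin (n + 1), (i : ℕ) ≠ j → (i : ℕ) + 1 ≠ j → (j : ℕ) + 1 ≠ i → M i j = 0)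
    (q : Fin (n + 1) → R) :
    q ⬝ᵥ M *ᵥ q = ∑ i, M i i * q i ^ 2 +
      ∑ k : Fin n, (M k.castSucc k.succ + M k.succ k.castSucc) * (q k.castSucc * q k.succ) := by
  have hsplit : ∀ i j, q i * (M i j * q j) = (if i = j then M i i * q i ^ 2 else 0) +
      (if (i : ℕ) + 1 = j then M i j * (q i * q j) else 0) +
      (if (j : ℕ) + 1 = i then M i j * (q i * q j) else 0) := fun i j => by
    by_cases hij : i = j
    · subst hij; simp only [↓reduceIte, Nat.add_eq_left, one_ne_zero, add_zero]; ring
    have hij' : (i : ℕ) ≠ j := Fin.val_ne_of_ne hij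
    by_cases h₁ : (i : ℕ) + 1 = j
    · simp only [hij, ↓reduceIte, h₁, zero_add, show (j : ℕ) + 1 ≠ i by omega, add_zero]
      ring
    by_cases h₂ : (j : ℕ) + 1 = i
    · simp only [hij, ↓reduceIte, h₁, add_zero, h₂, zero_add]; ring
    simp [hij, h₁, h₂, hzero i j hij' h₁ h₂]
  have hlower := Fin.sum_sum_ite_val_succ_eq fun j i => M i j * (q i * q j)
  rw [Finset.sum_comm] at hlower
  simp only [dotProduct, mulVec, Finset.mul_sum, hsplit, Finset.sum_add_distrib,
    Finset.sum_ite_eq, Finset.mem_univ, if_true, Fin.sum_sum_ite_val_succ_eq, hlower]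
  rw [add_assoc, ← Finset.sum_add_distrib]
  congr 1
  exact Finset.sum_congr rfl fun k _ => by ring

theorem Fin.sum_sq_sub_succ_sq {R : Type*} [CommRing R] {n : ℕ} (p : Fin (n + 1) → R) :
    p 0 ^ 2 + p (Fin.last n) ^ 2 + ∑ k : Fin n, (p k.castSucc - p k.succ) ^ 2 =
      2 * ∑ i, p i ^ 2 - 2 * ∑ k : Fin n, p k.castSucc * p k.succ := by
  have hexpand : ∑ k : Fin n, (p k.castSucc - p k.succ) ^ 2 = ∑ k : Fin n, p k.castSucc ^ 2 +
      ∑ k : Fin n, p k.succ ^ 2 - 2 * ∑ k : Fin n, p k.castSucc * p k.succ := by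
    simp only [sub_sq, Finset.sum_add_distrib, Finset.sum_sub_distrib, Finset.mul_sum, mul_assoc]
    ring
  linear_combination hexpand - Fin.sum_univ_succ (fun i => p i ^ 2) -
    Fin.sum_univ_castSucc (fun i => p i ^ 2)

theorem dotProduct_mulVec_of_scaled_dirichletLaplacian {R : Type*} [CommRing R] {n : ℕ}
    (M : Matrix (Fin (n + 1)) (Fin (n + 1)) R) (a q : Fin (n + 1) → R)
    (hdiag : ∀ i, M i i = 2 * a i ^ 2)
    (hoff1 : ∀ k : Fin n, M k.castSucc k.succ = -(a k.castSucc * a k.succ))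
    (hoff2 : ∀ k : Fin n, M k.succ k.castSucc = -(a k.castSucc * a k.succ))
    (hzero : ∀ i j : Fin (n + 1), (i : ℕ) ≠ j → (i : ℕ) + 1 ≠ j → (j : ℕ) + 1 ≠ i → M i j = 0) :
    q ⬝ᵥ M *ᵥ q = (a 0 * q 0) ^ 2 + (a (Fin.last n) * q (Fin.last n)) ^ 2 +
      ∑ k : Fin n, (a k.castSucc * q k.castSucc - a k.succ * q k.succ) ^ 2 := by
  rw [Fin.sum_sq_sub_succ_sq fun i => a i * q i, dotProduct_mulVec_of_tridiagonal M hzero,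
    Finset.mul_sum, Finset.mul_sum, sub_eq_add_neg, ← Finset.sum_neg_distrib]
  congr 1
  · exact Finset.sum_congr rfl fun i _ => by rw [hdiag]; ring
  · exact Finset.sum_congr rfl fun k _ => by rw [hoff1, hoff2]; ring

theorem Real.sqrt_prod_eq_sqrt_mul_sqrt_succ {x N : ℝ} (hx : 0 ≤ x) (hxN : x + 2 ≤ N) :
    √((x + 1) * (x + 2) * (N - x - 1) * (N - x - 2)) =
      √((x + 1) * (N - x - 1)) * √((x + 1 + 1) * (N - (x + 1) - 1)) := by
  rw [← Real.sqrt_mul (by nlinarith)]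
  ring_nf

/-- quadratic form identity for the su(N) linearization matrix
(with N = n + 2, so the matrix is (N-1)×(N-1) = (n+1)×(n+1), indices shifted by one). -/
theorem stmt0 (n N : ℕ) (hN : N = n + 2)
    (M : Matrix (Fin (n+1)) (Fin (n+1)) ℝ)
    (hdiag : ∀ i : Fin (n+1), M i i = 2 * ((i : ℝ) + 1) * ((N : ℝ) - (i : ℝ) - 1))
    (hoff1 : ∀ i : Fin n, M i.castSucc i.succ =
      -Real.sqrt (((i : ℝ) + 1) * ((i : ℝ) + 2) * ((N : ℝ) - (i : ℝ) - 1) * ((N : ℝ) - (i : ℝ) - 2)))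
    (hoff2 : ∀ i : Fin n, M i.succ i.castSucc =
      -Real.sqrt (((i : ℝ) + 1) * ((i : ℝ) + 2) * ((N : ℝ) - (i : ℝ) - 1) * ((N : ℝ) - (i : ℝ) - 2)))
    (hzero : ∀ i j : Fin (n+1), (i : ℕ) ≠ (j : ℕ) → (i : ℕ) + 1 ≠ (j : ℕ) →
      (j : ℕ) + 1 ≠ (i : ℕ) → M i j = 0)
    (q p : Fin (n+1) → ℝ)
    (hp : ∀ i : Fin (n+1), p i = Real.sqrt (((i : ℝ) + 1) * ((N : ℝ) - (i : ℝ) - 1)) * q i) :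
    q ⬝ᵥ M.mulVec q =
      (p 0) ^ 2 + (p (Fin.last n)) ^ 2 + ∑ i : Fin n, (p i.castSucc - p i.succ) ^ 2 := by
  set a : Fin (n + 1) → ℝ := fun i => √(((i : ℝ) + 1) * ((N : ℝ) - (i : ℝ) - 1))
  have hN' : (N : ℝ) = n + 2 := by exact_mod_cast hN
  have ha_sq (i : Fin (n + 1)) : a i ^ 2 = ((i : ℝ) + 1) * ((N : ℝ) - (i : ℝ) - 1) := by
    have hi : (i : ℝ) ≤ n := by exact_mod_cast i.is_le
    exact Real.sq_sqrt (by nlinarith)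
  have ha_mul (k : Fin n) : √(((k : ℝ) + 1) * ((k : ℝ) + 2) * ((N : ℝ) - (k : ℝ) - 1) *
      ((N : ℝ) - (k : ℝ) - 2)) = a k.castSucc * a k.succ := by
    have hk : (k : ℝ) + 1 ≤ n := by exact_mod_cast k.is_lt
    simpa [a] using Real.sqrt_prod_eq_sqrt_mul_sqrt_succ k.val.cast_nonneg (by linarith)
  rw [show p = fun i => a i * q i from funext hp]
  exact dotProduct_mulVec_of_scaled_dirichletLaplacian M a q
    (fun i => by rw [hdiag, ha_sq]; ring) (fun k => by rw [hoff1, ha_mul])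
    (fun k => by rw [hoff2, ha_mul]) hzero
end

section
/- Let N ≥ 2 and let M be the (N-1)×(N-1) real symmetric tridiagonal matrix with diagonal entries 2j(N-j) and off-diagonal entries -√(j(j+1)(N-j)(N-j-1)). Then M is positive definite. -/
/-!
Put `c i = √((i + 1) (N - i - 1))`. Then `M = D L D` with `D = diagonal c` and `L` the Dirichlet
Laplacian `tridiag(-1, 2, -1)`, so with `a = c • q` the quadratic form is
`2 ∑ aᵢ² - 2 ∑ aₖ aₖ₊₁ = a₀² + aₙ² + ∑ (aₖ - aₖ₊₁)²`, which vanishes only for `a = 0`, i.e. `q = 0`.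
-/

open Matrix Finset

theorem Fin.sum_sum_eq_of_tridiagonal {α : Type*} [AddCommMonoid α] {n : ℕ}
    (f : Fin (n+1) → Fin (n+1) → α)
    (hf : ∀ i j : Fin (n+1), (i : ℕ) ≠ j → (i : ℕ) + 1 ≠ j → (j : ℕ) + 1 ≠ i → f i j = 0) :
    ∑ i, ∑ j, f i j
      = ∑ i, f i i + ∑ k : Fin n, f k.castSucc k.succ + ∑ k : Fin n, f k.succ k.castSucc := by
  let e : Fin (n+1) ⊕ Fin n ⊕ Fin n → Fin (n+1) × Fin (n+1) :=
    Sum.elim (fun i ↦ (i, i))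
      (Sum.elim (fun k ↦ (k.castSucc, k.succ)) (fun k ↦ (k.succ, k.castSucc)))
  have he : Function.Injective e := by
    rintro (i | k | k) (i' | k' | k') h <;> simp [e, Prod.ext_iff, Fin.ext_iff] at h ⊢ <;> omega
  have hrange : ∀ p ∉ Set.range e, f p.1 p.2 = 0 := by
    rintro ⟨i, j⟩ hp
    refine hf i j ?_ ?_ ?_ <;> intro h <;> apply hp
    · exact ⟨.inl i, by simp [e, Fin.ext h]⟩
    · exact ⟨.inr (.inl ⟨i, by omega⟩), by simp [e, h]⟩
    · exact ⟨.inr (.inr ⟨j, by omega⟩), by simp [e, h]⟩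
  rw [← Fintype.sum_prod_type', ← Fintype.sum_of_injective e he _ _ hrange (fun _ ↦ rfl),
    Fintype.sum_sum_type, Fintype.sum_sum_type, add_assoc]
  rfl

theorem Fin.two_mul_sum_sq_sub_two_mul_sum_mul_succ {n : ℕ} (a : Fin (n+1) → ℝ) :
    2 * ∑ i, a i ^ 2 - 2 * ∑ k : Fin n, a k.castSucc * a k.succ
      = a 0 ^ 2 + a (Fin.last n) ^ 2 + ∑ k : Fin n, (a k.castSucc - a k.succ) ^ 2 := by
  have hsq : ∀ k : Fin n, (a k.castSucc - a k.succ) ^ 2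
      = a k.castSucc ^ 2 + a k.succ ^ 2 - 2 * (a k.castSucc * a k.succ) := fun k ↦ by ring
  rw [sum_congr rfl fun k _ ↦ hsq k, sum_sub_distrib, sum_add_distrib, ← mul_sum]
  linear_combination Fin.sum_univ_succ (fun i ↦ a i ^ 2) + Fin.sum_univ_castSucc (fun i ↦ a i ^ 2)

theorem Fin.sq_zero_add_sq_last_add_sum_sq_sub_succ_pos {n : ℕ} {a : Fin (n+1) → ℝ}
    (ha : a ≠ 0) :
    0 < a 0 ^ 2 + a (Fin.last n) ^ 2 + ∑ k : Fin n, (a k.castSucc - a k.succ) ^ 2 := by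
  by_contra! hle
  have hdiff : ∀ k ∈ (univ : Finset (Fin n)), 0 ≤ (a k.castSucc - a k.succ) ^ 2 :=
    fun k _ ↦ sq_nonneg _
  have hfirst : a 0 ^ 2 = 0 := by
    linarith [sq_nonneg (a 0), sq_nonneg (a (Fin.last n)), sum_nonneg hdiff]
  have hsum : ∑ k : Fin n, (a k.castSucc - a k.succ) ^ 2 = 0 := by
    linarith [sq_nonneg (a 0), sq_nonneg (a (Fin.last n)), sum_nonneg hdiff]
  have hsucc : ∀ k : Fin n, a k.castSucc = a k.succ := fun k ↦
    sub_eq_zero.mp <| pow_eq_zero_iff two_ne_zero |>.mp <|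
      (sum_eq_zero_iff_of_nonneg hdiff).mp hsum k (mem_univ k)
  refine ha (funext fun i ↦ ?_)
  induction i using Fin.induction with
  | zero => exact pow_eq_zero_iff two_ne_zero |>.mp hfirst
  | succ k ih => rw [← hsucc k]; exact ih

theorem Matrix.dotProduct_mulVec_pos_of_tridiagonal {n : ℕ} (M : Matrix (Fin (n+1)) (Fin (n+1)) ℝ)
    (c : Fin (n+1) → ℝ) (hc : ∀ i, c i ≠ 0) (hdiag : ∀ i, M i i = 2 * c i ^ 2)
    (hup : ∀ k : Fin n, M k.castSucc k.succ = -(c k.castSucc * c k.succ))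
    (hlow : ∀ k : Fin n, M k.succ k.castSucc = -(c k.castSucc * c k.succ))
    (hzero : ∀ i j : Fin (n+1), (i : ℕ) ≠ j → (i : ℕ) + 1 ≠ j → (j : ℕ) + 1 ≠ i → M i j = 0)
    {q : Fin (n+1) → ℝ} (hq : q ≠ 0) :
    0 < q ⬝ᵥ M *ᵥ q := by
  set a : Fin (n+1) → ℝ := fun i ↦ c i * q i
  have ha : a ≠ 0 := fun h ↦ hq <| funext fun i ↦
    (mul_eq_zero.mp (congrFun h i)).resolve_left (hc i)
  have hform : q ⬝ᵥ M *ᵥ q = 2 * ∑ i, a i ^ 2 - 2 * ∑ k : Fin n, a k.castSucc * a k.succ := by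
    rw [dot_mulVec_eq_sum_sum, Fin.sum_sum_eq_of_tridiagonal (fun j i ↦ q i * M i j * q j)
      fun j i h₁ h₂ h₃ ↦ by rw [hzero i j (Ne.symm h₁) h₃ h₂, mul_zero, zero_mul]]
    rw [add_assoc, ← sum_add_distrib, sub_eq_add_neg, mul_sum, mul_sum, ← sum_neg_distrib]
    congr 1 <;> refine sum_congr rfl fun _ _ ↦ ?_
    · rw [hdiag]; ring
    · rw [hup, hlow]; ring
  rw [hform, Fin.two_mul_sum_sq_sub_two_mul_sum_mul_succ]
  exact Fin.sq_zero_add_sq_last_add_sum_sq_sub_succ_pos ha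

/-- the su(N) linearization matrix is positive definite
(with N = n + 2, so the matrix is (N-1)×(N-1) = (n+1)×(n+1), indices shifted by one). -/
theorem stmt1 (n N : ℕ) (hN : N = n + 2)
    (M : Matrix (Fin (n+1)) (Fin (n+1)) ℝ)
    (hdiag : ∀ i : Fin (n+1), M i i = 2 * ((i : ℝ) + 1) * ((N : ℝ) - (i : ℝ) - 1))
    (hoff1 : ∀ i : Fin n, M i.castSucc i.succ =
      -Real.sqrt (((i : ℝ) + 1) * ((i : ℝ) + 2) * ((N : ℝ) - (i : ℝ) - 1) * ((N : ℝ) - (i : ℝ) - 2)))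
    (hoff2 : ∀ i : Fin n, M i.succ i.castSucc =
      -Real.sqrt (((i : ℝ) + 1) * ((i : ℝ) + 2) * ((N : ℝ) - (i : ℝ) - 1) * ((N : ℝ) - (i : ℝ) - 2)))
    (hzero : ∀ i j : Fin (n+1), (i : ℕ) ≠ (j : ℕ) → (i : ℕ) + 1 ≠ (j : ℕ) →
      (j : ℕ) + 1 ≠ (i : ℕ) → M i j = 0) :
    ∀ q : Fin (n+1) → ℝ, q ≠ 0 → 0 < q ⬝ᵥ M.mulVec q := by
  intro q hq
  have hpos : ∀ i : Fin (n+1), 0 < ((i : ℝ) + 1) * ((N : ℝ) - i - 1) := fun i ↦ by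
    have hi : (i : ℝ) + 1 ≤ n + 1 := by exact_mod_cast i.isLt
    subst hN; push_cast; nlinarith
  let c : Fin (n+1) → ℝ := fun i ↦ Real.sqrt (((i : ℝ) + 1) * ((N : ℝ) - i - 1))
  have hoff : ∀ k : Fin n, -Real.sqrt (((k : ℝ) + 1) * ((k : ℝ) + 2) * ((N : ℝ) - k - 1) *
      ((N : ℝ) - k - 2)) = -(c k.castSucc * c k.succ) := fun k ↦ by
    have hk : 0 ≤ ((k : ℝ) + 1) * ((N : ℝ) - k - 1) := by simpa using (hpos k.castSucc).le
    simp only [c, Fin.val_castSucc, Fin.val_succ, Nat.cast_succ]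
    rw [← Real.sqrt_mul hk]
    ring_nf
  refine M.dotProduct_mulVec_pos_of_tridiagonal c (fun i ↦ (Real.sqrt_pos.mpr (hpos i)).ne')
    (fun i ↦ ?_) (fun k ↦ (hoff1 k).trans (hoff k)) (fun k ↦ (hoff2 k).trans (hoff k)) hzero hq
  rw [hdiag, Real.sq_sqrt (hpos i).le]
  ring
end

section
/- Fix an integer N ≥ 2. Suppose nonnegative reals N_1,…,N_{N-1} satisfy N_j ≥ 1 + (N_{j+1} + N_{j-1})/2 for all j = 1,…,N-1, where N_0 = N_N = 0. Then N_j ≥ j(N-j) for all j. -/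
/-! The excess `w j = v j - j (N - j)` is midpoint concave, because the parabola `j (N - j)`
satisfies the inequality with equality, and it vanishes at `0` and `N`. For a midpoint concave
sequence with `w 0 ≥ 0` the ratios `w j / j` are nonincreasing, so `w N = 0` forces `w j ≥ 0`. -/

section MidpointConcave

variable {w : ℕ → ℝ} {n : ℕ}

theorem mul_succ_le_succ_mul_of_midpointConcave (h0 : 0 ≤ w 0)
    (hconc : ∀ j, j + 2 ≤ n → w (j + 2) + w j ≤ 2 * w (j + 1)) :
    ∀ j, j + 1 ≤ n → (j : ℝ) * w (j + 1) ≤ (j + 1) * w j := by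
  intro j
  induction j with
  | zero => intro; simpa using h0
  | succ j ih =>
    intro hj
    have hprev := ih (by omega)
    have hstep : ((j : ℝ) + 1) * w (j + 2) ≤ ((j : ℝ) + 1) * (2 * w (j + 1) - w j) :=
      mul_le_mul_of_nonneg_left (by linarith [hconc j hj]) (by positivity)
    push_cast
    linarith

theorem nonneg_of_midpointConcave (h0 : 0 ≤ w 0) (hn : 0 ≤ w n)
    (hconc : ∀ j, j + 2 ≤ n → w (j + 2) + w j ≤ 2 * w (j + 1)) :
    ∀ j, j ≤ n → 0 ≤ w j := by
  have hratio := mul_succ_le_succ_mul_of_midpointConcave h0 hconc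
  intro m hm
  induction hm using Nat.decreasingInduction with
  | self => exact hn
  | of_succ j hj ih =>
    have : (0 : ℝ) ≤ (j + 1) * w j := le_trans (by positivity) (hratio j hj)
    exact nonneg_of_mul_nonneg_right this (by positivity)

end MidpointConcave

theorem one_add_avg_parabola (N j : ℝ) :
    1 + ((j + 1) * (N - (j + 1)) + (j - 1) * (N - (j - 1))) / 2 = j * (N - j) := by
  ring

theorem stmt4_general (N : ℕ) (v : ℕ → ℝ)
    (h0 : v 0 = 0) (hNN : v N = 0)
    (hineq : ∀ j, 1 ≤ j → j ≤ N - 1 → 1 + (v (j+1) + v (j-1))/2 ≤ v j) :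
    ∀ j, 1 ≤ j → j ≤ N - 1 → (j : ℝ) * ((N : ℝ) - (j : ℝ)) ≤ v j := by
  set w : ℕ → ℝ := fun j => v j - j * (N - j) with hw
  have hconc : ∀ j, j + 2 ≤ N → w (j + 2) + w j ≤ 2 * w (j + 1) := by
    intro j hj
    have h := hineq (j + 1) (by omega) (by omega)
    have hpar := one_add_avg_parabola N (j + 1)
    simp only [hw, Nat.add_sub_cancel] at h ⊢
    push_cast at h hpar ⊢
    linarith
  have hw_nonneg := nonneg_of_midpointConcave (by simp [hw, h0]) (by simp [hw, hNN]) hconc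
  intro j _ hj
  linarith [hw_nonneg j (by omega)]

/-- if nonnegative reals N_1,…,N_{N-1} (with N_0 = N_N = 0) satisfy
N_j ≥ 1 + (N_{j+1} + N_{j-1})/2, then N_j ≥ j(N-j). -/
theorem stmt4 (N : ℕ) (hN : 2 ≤ N) (v : ℕ → ℝ)
    (h0 : v 0 = 0) (hNN : v N = 0)
    (hnonneg : ∀ j, 1 ≤ j → j ≤ N - 1 → 0 ≤ v j)
    (hineq : ∀ j, 1 ≤ j → j ≤ N - 1 → 1 + (v (j+1) + v (j-1))/2 ≤ v j) :
    ∀ j, 1 ≤ j → j ≤ N - 1 → (j : ℝ) * ((N : ℝ) - (j : ℝ)) ≤ v j :=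
  stmt4_general N v h0 hNN hineq
end
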